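/- For every 0 < ℓ < π and every κ > 0, the quantity κ(ℓ−π)/(cosh(κ(π−ℓ))−1) + coth(κ(π−ℓ)/2) + coth(κℓ) − κℓ·csch²(κℓ) is strictly positive. -/

import Mathlib

/-!
Since `cosh a - 1 = 2 sinh² (a / 2)`, the first term equals `-(a / 2) csch² (a / 2)` with
`a = κ (π - ℓ)`, so the expression splits as `h (a / 2) + h (κ ℓ)` with
`h x = coth x - x csch² x`. Each summand is positive because `2 x < sinh (2 x) = 2 sinh x cosh x`.
-/

open Real

lemma cosh_sub_one_eq_two_mul_sinh_half_sq (x : ℝ) : cosh x - 1 = 2 * sinh (x / 2) ^ 2 := by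
  conv_lhs => rw [← mul_div_cancel₀ x (two_ne_zero' ℝ), cosh_two_mul, cosh_sq]
  ring

lemma div_sinh_sq_lt_cosh_div_sinh {x : ℝ} (hx : 0 < x) : x / sinh x ^ 2 < cosh x / sinh x := by
  have hsinh : 0 < sinh x := sinh_pos_iff.mpr hx
  have hdouble : 2 * x < sinh (2 * x) := self_lt_sinh_iff.mpr (by positivity)
  rw [sinh_two_mul] at hdouble
  rw [div_lt_div_iff₀ (by positivity) hsinh]
  nlinarith

theorem partial_deriv_positive (ℓ κ : ℝ) (hℓ : 0 < ℓ) (hℓπ : ℓ < Real.pi) (hκ : 0 < κ) :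
    0 < κ * (ℓ - Real.pi) / (Real.cosh (κ * (Real.pi - ℓ)) - 1) +
        Real.cosh (κ * (Real.pi - ℓ) / 2) / Real.sinh (κ * (Real.pi - ℓ) / 2) +
        Real.cosh (κ * ℓ) / Real.sinh (κ * ℓ) -
        κ * ℓ * (1 / Real.sinh (κ * ℓ)) ^ 2 := by
  set a := κ * (π - ℓ) with ha
  have ha_pos : 0 < a := mul_pos hκ (by linarith)
  have hsplit : κ * (ℓ - π) / (cosh a - 1) + cosh (a / 2) / sinh (a / 2) +
        cosh (κ * ℓ) / sinh (κ * ℓ) - κ * ℓ * (1 / sinh (κ * ℓ)) ^ 2 =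
      (cosh (a / 2) / sinh (a / 2) - (a / 2) / sinh (a / 2) ^ 2) +
      (cosh (κ * ℓ) / sinh (κ * ℓ) - (κ * ℓ) / sinh (κ * ℓ) ^ 2) := by
    rw [cosh_sub_one_eq_two_mul_sinh_half_sq, ha]
    ring
  rw [hsplit]
  have h₁ := div_sinh_sq_lt_cosh_div_sinh (half_pos ha_pos)
  have h₂ := div_sinh_sq_lt_cosh_div_sinh (mul_pos hκ hℓ)
  linarith
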